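/- Over the alphabet A = {a, b}, let K = bA^* ∪ aaA^* ∪ (ab)^*. Then for every n ≥ 2 and all nonempty words w₁, …, wₙ over A, we have ⧢(w₁, …, wₙ) ∩ K ≠ ∅. -/

import Mathlib

/-!
If some word begins with `b`, reading it in full before all others gives a shuffle in `bA^*`.
Otherwise the first two words both begin with `a`, and reading those two letters first gives a
shuffle in `aaA^*`.
-/

namespace CTS

/-- Shuffle of two words: `ε ⧢ v = {v}`, `u ⧢ ε = {u}`,
`(x·u) ⧢ (y·v) = x·(u ⧢ y·v) ∪ y·(x·u ⧢ v)`. -/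
def shuffle {α : Type*} : List α → List α → Set (List α)
  | [], v => {v}
  | u, [] => {u}
  | x :: u, y :: v =>
      (List.cons x) '' shuffle u (y :: v) ∪ (List.cons y) '' shuffle (x :: u) v
  termination_by u v => u.length + v.length

/-- Shuffle of a tuple of words: `⧢() = {ε}` and
`⧢(w₁, …, wₘ₊₁) = ⋃_{v ∈ ⧢(w₁, …, wₘ)} v ⧢ wₘ₊₁`. -/
def Shuffles {α : Type*} (ws : List (List α)) : Set (List α) :=
  ws.foldl (fun S w => ⋃ v ∈ S, shuffle v w) {[]}

/-- `wpow u n` is the `n`-fold concatenation `u^n` of the word `u`. -/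
def wpow {α : Type*} (u : List α) : ℕ → List α
  | 0 => []
  | n + 1 => u ++ wpow u n

/-- `star u = {u^n : n ∈ ℕ}`. -/
def star {α : Type*} (u : List α) : Set (List α) := {w | ∃ n, w = wpow u n}

/-- Words that are (possibly empty) concatenations of blocks from `S`. -/
def ConcatsOf {α : Type*} (S : Set (List α)) : Set (List α) :=
  {w | ∃ L : List (List α), (∀ u ∈ L, u ∈ S) ∧ w = L.flatten}

/-- The two-letter alphabet `{a, b}`. -/
inductive AB : Type
  | a : AB
  | b : AB
deriving DecidableEq

section
variable {α : Type*}

theorem append_mem_shuffle : ∀ u v : List α, u ++ v ∈ shuffle u v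
  | [], v => by simp [shuffle]
  | x :: u, [] => by simp [shuffle]
  | x :: u, y :: v => by
      rw [shuffle]
      exact Or.inl ⟨u ++ y :: v, append_mem_shuffle u (y :: v), rfl⟩

theorem append_mem_shuffle_swap : ∀ u v : List α, v ++ u ∈ shuffle u v
  | [], v => by simp [shuffle]
  | x :: u, [] => by simp [shuffle]
  | x :: u, y :: v => by
      rw [shuffle]
      exact Or.inr ⟨v ++ x :: u, append_mem_shuffle_swap (x :: u) v, rfl⟩

theorem cons_cons_append_mem_shuffle (x y : α) (u v : List α) :
    x :: y :: (u ++ v) ∈ shuffle (x :: u) (y :: v) := by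
  rw [shuffle]
  refine Or.inl ⟨y :: (u ++ v), ?_, rfl⟩
  cases u with
  | nil => simp [shuffle]
  | cons z u => rw [shuffle]; exact Or.inr ⟨_, append_mem_shuffle (z :: u) v, rfl⟩

theorem Shuffles_append_singleton (ws : List (List α)) (u : List α) :
    Shuffles (ws ++ [u]) = ⋃ s ∈ Shuffles ws, shuffle s u := by
  simp [Shuffles, List.foldl_append]

theorem Shuffles_singleton (u : List α) : Shuffles [u] = {u} := by
  simp [Shuffles, shuffle]

theorem mem_Shuffles_append_singleton {ws : List (List α)} {s u r : List α}
    (hs : s ∈ Shuffles ws) (hr : r ∈ shuffle s u) : r ∈ Shuffles (ws ++ [u]) := by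
  rw [Shuffles_append_singleton]
  exact Set.mem_biUnion hs hr

theorem append_flatten_mem_Shuffles_append :
    ∀ {ws : List (List α)} {s : List α} (l : List (List α)),
      s ∈ Shuffles ws → s ++ l.flatten ∈ Shuffles (ws ++ l)
  | _, _, [], hs => by simpa using hs
  | ws, s, u :: l, hs => by
      have := append_flatten_mem_Shuffles_append l
        (mem_Shuffles_append_singleton hs (append_mem_shuffle s u))
      simpa using this

theorem flatten_mem_Shuffles (l : List (List α)) : l.flatten ∈ Shuffles l := by
  have hnil : ([] : List α) ∈ Shuffles [] := by simp [Shuffles]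
  simpa using append_flatten_mem_Shuffles_append l hnil

theorem exists_cons_mem_Shuffles_of_cons_mem {ws : List (List α)} {x : α} {u : List α}
    (hu : x :: u ∈ ws) : ∃ t, x :: t ∈ Shuffles ws := by
  obtain ⟨l₁, l₂, rfl⟩ := List.append_of_mem hu
  -- read `x :: u` in full first
  have hmid : x :: u ++ l₁.flatten ∈ Shuffles (l₁ ++ [x :: u]) :=
    mem_Shuffles_append_singleton (flatten_mem_Shuffles l₁) (append_mem_shuffle_swap _ _)
  exact ⟨u ++ l₁.flatten ++ l₂.flatten, by
    simpa using append_flatten_mem_Shuffles_append l₂ hmid⟩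

theorem exists_cons_cons_mem_Shuffles (x y : α) (u v : List α) (l : List (List α)) :
    ∃ t, x :: y :: t ∈ Shuffles ((x :: u) :: (y :: v) :: l) := by
  have hxy : x :: y :: (u ++ v) ∈ Shuffles [x :: u, y :: v] :=
    mem_Shuffles_append_singleton (ws := [x :: u]) (by simp [Shuffles_singleton])
      (cons_cons_append_mem_shuffle x y u v)
  exact ⟨u ++ v ++ l.flatten, by
    simpa using append_flatten_mem_Shuffles_append l hxy⟩

end

/-- with `K = bA^* ∪ aaA^* ∪ (ab)^*`, every tuple of `n ≥ 2` nonempty words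
over `{a, b}` has some interleaving in `K`. -/
theorem stmt16 (n : ℕ) (hn : 2 ≤ n) (w : Fin n → List AB) (hw : ∀ i, w i ≠ []) :
    (Shuffles (List.ofFn w) ∩
        ({v : List AB | ∃ t, v = AB.b :: t} ∪
          {v : List AB | ∃ t, v = AB.a :: AB.a :: t} ∪
          star [AB.a, AB.b])).Nonempty := by
  obtain ⟨m, rfl⟩ := Nat.exists_eq_add_of_le' hn
  obtain ⟨x, u, hu⟩ := List.exists_cons_of_ne_nil (hw 0)
  obtain ⟨y, v, hv⟩ := List.exists_cons_of_ne_nil (hw 1)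
  set rest := List.ofFn fun i : Fin m => w i.succ.succ
  have hws : List.ofFn w = (x :: u) :: (y :: v) :: rest := by
    rw [List.ofFn_succ, List.ofFn_succ, ← hu, ← hv]; rfl
  rw [hws]
  cases x <;> cases y
  case a.a =>
    obtain ⟨t, ht⟩ := exists_cons_cons_mem_Shuffles AB.a AB.a u v rest
    exact ⟨_, ht, .inl (.inr ⟨t, rfl⟩)⟩
  case a.b =>
    obtain ⟨t, ht⟩ := exists_cons_mem_Shuffles_of_cons_mem
      (List.mem_cons_of_mem _ List.mem_cons_self : AB.b :: v ∈ (AB.a :: u) :: (AB.b :: v) :: rest)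
    exact ⟨_, ht, .inl (.inl ⟨t, rfl⟩)⟩
  all_goals
    obtain ⟨t, ht⟩ := exists_cons_mem_Shuffles_of_cons_mem
      (List.mem_cons_self : AB.b :: u ∈ (AB.b :: u) :: _)
    exact ⟨_, ht, .inl (.inl ⟨t, rfl⟩)⟩

end CTS
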